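/- The Kronecker sequence x_i = iα mod 1 is quasi-uniform over [0,1] if and only if α is a badly approximable number. -/

import Mathlib

open scoped BigOperators

/-- The Gauss-map iterates: `alphaSeq α m` is `α_m`. -/
noncomputable def alphaSeq (α : ℝ) : ℕ → ℝ
  | 0 => Int.fract α
  | m + 1 => Int.fract (1 / alphaSeq α m)

/-- Partial quotients of the continued fraction of `α`: `partialQuot α (m+1) = a_{m+1} = ⌊1/α_m⌋`. -/
noncomputable def partialQuot (α : ℝ) : ℕ → ℕ
  | 0 => (⌊α⌋).toNat
  | m + 1 => (⌊1 / alphaSeq α m⌋).toNat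

/-- `eta α (m+1) = η_m = ∏_{j=0}^m α_j`, with `eta α 0 = η_{-1} = 1`. -/
noncomputable def eta (α : ℝ) : ℕ → ℝ
  | 0 => 1
  | m + 1 => eta α m * alphaSeq α m

/-- `denomSeq α m = s_m`. -/
noncomputable def denomSeq (α : ℝ) : ℕ → ℕ
  | 0 => 1
  | 1 => partialQuot α 1
  | m + 2 => partialQuot α (m + 2) * denomSeq α (m + 1) + denomSeq α m

/-- `denomPred α m = s_{m-1}`, with `s_{-1} = 0`. -/
noncomputable def denomPred (α : ℝ) : ℕ → ℕ
  | 0 => 0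
  | m + 1 => denomSeq α m

/-- `nSeq α m = n_m = s_m + s_{m-1}` (so `n_0 = 1`). -/
noncomputable def nSeq (α : ℝ) (m : ℕ) : ℕ := denomSeq α m + denomPred α m

/-- The Kronecker sequence `x_i = iα mod 1`. -/
noncomputable def kron (α : ℝ) (i : ℕ) : ℝ := Int.fract (i * α)

/-- Fill distance of the first `n` points of `x` in `[0,1]`. -/
noncomputable def fillDist (x : ℕ → ℝ) (n : ℕ) : ℝ :=
  ⨆ y : Set.Icc (0:ℝ) 1, ⨅ i : Fin n, |(y : ℝ) - x i|

/-- Separation radius of the first `n` points of `x`. -/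
noncomputable def sepRad (x : ℕ → ℝ) (n : ℕ) : ℝ :=
  (1 / 2) * ⨅ p : {p : Fin n × Fin n // p.1 < p.2}, |x p.1.1 - x p.1.2|

/-- The first `n` Kronecker points, sorted increasingly. -/
noncomputable def sortedKron (α : ℝ) (n : ℕ) : List ℝ :=
  ((Finset.range n).image (kron α)).sort (· ≤ ·)

/-- The `n` consecutive gap lengths of the first `n` Kronecker points,
including the wrap-around gap up to `1`. -/
noncomputable def kronGaps (α : ℝ) (n : ℕ) : List ℝ :=
  List.zipWith (fun a b => b - a) (sortedKron α n) ((sortedKron α n).tail ++ [1])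

/-! For irrational `α` with convergent denominators `s_m`, the numbers `η_m = ‖s_m α‖` decrease and
satisfy `η_{m-1} = a_{m+1} η_m + η_{m+1}`. By best approximation no two of the first `n ≤ s_{m+1}`
points are closer than `η_m`, while the returns `s_m α ≡ ±η_m` and `s_{m-1} α ≡ ∓η_{m-1}` (mod 1)
leave no gap longer than `η_{m-1} + η_m` once `n > s_m`. Hence
`h_n / q_n ≤ 2 (η_{m-1} + η_m) / η_m ≤ 2 (a_{m+1} + 2)`. Conversely, among the first `s_m + 2`
points two are `η_m` apart, while `h_n ≥ 1 / (2n)`; so `h_n ≤ C q_n` forces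
`a_{m+1} ≤ 1 / (s_m η_m) ≤ 3 C`. For rational `α` two points coincide. -/

theorem ne_zero_and_mul_nonpos_of_mul_add_mul_eq {q q' k x y : ℤ} (hq' : 0 < q') (hk : 0 < k)
    (hkq : k < q) (h : x * q + y * q' = k) : y ≠ 0 ∧ x * y ≤ 0 := by
  constructor
  · rintro rfl
    rcases lt_trichotomy x 0 with hx | rfl | hx <;> nlinarith
  · by_contra! hxy
    rcases lt_trichotomy x 0 with hx | rfl | hx <;> rcases lt_trichotomy y 0 with hy | rfl | hy <;>
      nlinarith

theorem abs_le_abs_intCast_mul_add {x y : ℤ} {A B : ℝ} (hy : y ≠ 0) (hxy : x * y ≤ 0)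
    (hAB : A * B ≤ 0) : |B| ≤ |x * A + y * B| := by
  have hy1 : (1 : ℝ) ≤ (y : ℝ) ^ 2 := by
    have : (1 : ℤ) ≤ y ^ 2 := by nlinarith [Int.one_le_abs hy, sq_abs y]
    exact_mod_cast this
  have hxy' : ((x : ℝ) * y) ≤ 0 := by exact_mod_cast hxy
  rw [← sq_le_sq]
  nlinarith [mul_nonneg_of_nonpos_of_nonpos hxy' hAB, sq_nonneg ((x : ℝ) * A), sq_nonneg B]

section ContinuedFraction

variable {α : ℝ}

theorem irrational_alphaSeq (hα : Irrational α) (m : ℕ) : Irrational (alphaSeq α m) := by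
  induction m with
  | zero => exact hα.sub_intCast _
  | succ m ih => exact (one_div (alphaSeq α m) ▸ ih.inv).sub_intCast _

theorem alphaSeq_mem_Ioo (hα : Irrational α) (m : ℕ) : alphaSeq α m ∈ Set.Ioo 0 1 := by
  have hne : alphaSeq α m ≠ 0 := (irrational_alphaSeq hα m).ne_zero
  cases m <;> exact ⟨(Int.fract_nonneg _).lt_of_ne' hne, Int.fract_lt_one _⟩

theorem one_lt_one_div_alphaSeq (hα : Irrational α) (m : ℕ) : 1 < 1 / alphaSeq α m := by
  obtain ⟨h0, h1⟩ := alphaSeq_mem_Ioo hα m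
  rwa [lt_one_div one_pos h0, one_div_one]

theorem one_le_floor_one_div_alphaSeq (hα : Irrational α) (m : ℕ) :
    1 ≤ ⌊1 / alphaSeq α m⌋ :=
  Int.le_floor.mpr (by exact_mod_cast (one_lt_one_div_alphaSeq hα m).le)

theorem partialQuot_succ_cast (hα : Irrational α) (m : ℕ) :
    (partialQuot α (m + 1) : ℝ) = ⌊1 / alphaSeq α m⌋ := by
  have h : (0 : ℤ) ≤ ⌊1 / alphaSeq α m⌋ := zero_le_one.trans (one_le_floor_one_div_alphaSeq hα m)
  rw [partialQuot, ← Int.cast_natCast, Int.toNat_of_nonneg h]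

theorem one_le_partialQuot (hα : Irrational α) (m : ℕ) : 1 ≤ partialQuot α (m + 1) := by
  simpa [partialQuot] using Int.toNat_le_toNat (one_le_floor_one_div_alphaSeq hα m)

theorem alphaSeq_succ (hα : Irrational α) (m : ℕ) :
    alphaSeq α (m + 1) = 1 / alphaSeq α m - partialQuot α (m + 1) := by
  rw [partialQuot_succ_cast hα]
  rfl

theorem eta_succ (m : ℕ) : eta α (m + 1) = eta α m * alphaSeq α m := rfl

theorem eta_one : eta α 1 = Int.fract α := by simp [eta, alphaSeq]

theorem eta_pos (hα : Irrational α) (m : ℕ) : 0 < eta α m := by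
  induction m with
  | zero => exact one_pos
  | succ m ih => exact mul_pos ih (alphaSeq_mem_Ioo hα m).1

theorem eta_succ_lt (hα : Irrational α) (m : ℕ) : eta α (m + 1) < eta α m :=
  mul_lt_of_lt_one_right (eta_pos hα m) (alphaSeq_mem_Ioo hα m).2

theorem eta_antitone (hα : Irrational α) : Antitone (eta α) :=
  antitone_nat_of_succ_le fun m => (eta_succ_lt hα m).le

theorem eta_add_two (hα : Irrational α) (m : ℕ) :
    eta α (m + 2) = eta α m - partialQuot α (m + 1) * eta α (m + 1) := by
  have h0 : alphaSeq α m ≠ 0 := (alphaSeq_mem_Ioo hα m).1.ne'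
  rw [eta_succ, eta_succ, alphaSeq_succ hα]
  field_simp

theorem denomSeq_add_two (m : ℕ) :
    denomSeq α (m + 2) = partialQuot α (m + 2) * denomSeq α (m + 1) + denomSeq α m := rfl

theorem one_le_denomSeq (hα : Irrational α) (m : ℕ) : 1 ≤ denomSeq α m := by
  induction m using Nat.twoStepInduction with
  | zero => exact le_rfl
  | one => exact one_le_partialQuot hα 0
  | more m _ ih =>
    rw [denomSeq_add_two]
    nlinarith [one_le_partialQuot hα (m + 1)]

theorem partialQuot_mul_denomSeq_le (m : ℕ) :
    partialQuot α (m + 1) * denomSeq α m ≤ denomSeq α (m + 1) := by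
  cases m with
  | zero => simp [denomSeq]
  | succ m => exact Nat.le_add_right _ _

theorem denomSeq_le_succ (hα : Irrational α) (m : ℕ) : denomSeq α m ≤ denomSeq α (m + 1) :=
  (Nat.le_mul_of_pos_left _ (one_le_partialQuot hα m)).trans (partialQuot_mul_denomSeq_le m)

theorem self_le_denomSeq (hα : Irrational α) (m : ℕ) : m ≤ denomSeq α m := by
  induction m using Nat.twoStepInduction with
  | zero => exact Nat.zero_le _
  | one => exact one_le_partialQuot hα 0
  | more m _ ih =>
    rw [denomSeq_add_two]
    nlinarith [one_le_partialQuot hα (m + 1), one_le_denomSeq hα m]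

theorem denomPred_le_denomSeq (hα : Irrational α) (m : ℕ) : denomPred α m ≤ denomSeq α m := by
  cases m with
  | zero => exact Nat.zero_le _
  | succ m => exact denomSeq_le_succ hα m

/-- Numerators of the convergents of `Int.fract α`. -/
noncomputable def numSeq (α : ℝ) : ℕ → ℕ
  | 0 => 0
  | 1 => 1
  | m + 2 => partialQuot α (m + 2) * numSeq α (m + 1) + numSeq α m

theorem numSeq_add_two (m : ℕ) :
    numSeq α (m + 2) = partialQuot α (m + 2) * numSeq α (m + 1) + numSeq α m := rfl

theorem denomSeq_mul_numSeq_sub (m : ℕ) :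
    (denomSeq α (m + 1) * numSeq α m - denomSeq α m * numSeq α (m + 1) : ℤ) = (-1) ^ (m + 1) := by
  induction m with
  | zero => simp [denomSeq, numSeq]
  | succ m ih =>
    rw [denomSeq_add_two, numSeq_add_two, pow_succ, ← ih]
    push_cast
    ring

theorem denomSeq_mul_fract_sub_numSeq (hα : Irrational α) (m : ℕ) :
    denomSeq α m * Int.fract α - numSeq α m = (-1) ^ m * eta α (m + 1) := by
  induction m using Nat.twoStepInduction with
  | zero => simp [denomSeq, numSeq, eta_one]
  | one =>
    rw [eta_add_two hα 0, eta_one]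
    simp [denomSeq, numSeq, eta]
  | more m ih₀ ih₁ =>
    rw [denomSeq_add_two, numSeq_add_two, eta_add_two hα (m + 1)]
    push_cast
    linear_combination (partialQuot α (m + 2) : ℝ) * ih₁ + ih₀

theorem denomSeq_mul_eta_add (hα : Irrational α) (m : ℕ) :
    denomSeq α (m + 1) * eta α (m + 1) + denomSeq α m * eta α (m + 2) = 1 := by
  have hdet : (denomSeq α (m + 1) * numSeq α m - denomSeq α m * numSeq α (m + 1) : ℝ) =
      (-1) ^ (m + 1) := by exact_mod_cast denomSeq_mul_numSeq_sub m
  have h₀ := denomSeq_mul_fract_sub_numSeq hα m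
  have h₁ := denomSeq_mul_fract_sub_numSeq hα (m + 1)
  have hsq : ((-1 : ℝ) ^ m) ^ 2 = 1 := by rw [← pow_mul, pow_mul', neg_one_sq, one_pow]
  linear_combination (-(-1 : ℝ) ^ m) * (denomSeq α (m + 1) * h₀ - denomSeq α m * h₁ + hdet) -
    (denomSeq α (m + 1) * eta α (m + 1) + denomSeq α m * eta α (m + 2) - 1) * hsq

theorem exists_intCast_eq_denomSeq_mul_sub {m k : ℕ} (c : ℤ) :
    ∃ x y : ℤ, x * denomSeq α (m + 1) + y * denomSeq α m = k ∧
      (k : ℝ) * α - c = x * (denomSeq α (m + 1) * Int.fract α - numSeq α (m + 1)) +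
        y * (denomSeq α m * Int.fract α - numSeq α m) := by
  set ε : ℤ := (-1) ^ (m + 1)
  have hdet := denomSeq_mul_numSeq_sub (α := α) m
  have hε : ε * ε = 1 := by rw [← mul_pow]; norm_num
  set c' : ℤ := c - k * ⌊α⌋
  refine ⟨ε * (numSeq α m * k - denomSeq α m * c'),
    ε * (denomSeq α (m + 1) * c' - numSeq α (m + 1) * k),
    by linear_combination (ε * k) * hdet + k * hε, ?_⟩
  have hnum : ε * (numSeq α m * k - denomSeq α m * c') * numSeq α (m + 1) +
      ε * (denomSeq α (m + 1) * c' - numSeq α (m + 1) * k) * numSeq α m = c' := by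
    linear_combination (ε * c') * hdet + c' * hε
  have hden : ε * (numSeq α m * k - denomSeq α m * c') * denomSeq α (m + 1) +
      ε * (denomSeq α (m + 1) * c' - numSeq α (m + 1) * k) * denomSeq α m = k := by
    linear_combination (ε * k) * hdet + k * hε
  have hnum' := congrArg (Int.cast : ℤ → ℝ) hnum
  have hden' := congrArg (Int.cast : ℤ → ℝ) hden
  push_cast [c'] at hnum' hden' ⊢
  linear_combination (-Int.fract α) * hden' + hnum' + k * Int.self_sub_floor α

/-- Best approximation by the convergents: `eta α (m + 1) = ‖s_m α‖`. -/
theorem eta_le_abs_mul_sub (hα : Irrational α) {m k : ℕ} (hk : 0 < k)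
    (hks : k < denomSeq α (m + 1)) (c : ℤ) : eta α (m + 1) ≤ |k * α - c| := by
  obtain ⟨x, y, hxy, hdecomp⟩ := exists_intCast_eq_denomSeq_mul_sub (α := α) (m := m) (k := k) c
  obtain ⟨hy, hxy⟩ := ne_zero_and_mul_nonpos_of_mul_add_mul_eq
    (by exact_mod_cast one_le_denomSeq hα m) (by exact_mod_cast hk) (by exact_mod_cast hks) hxy
  rw [hdecomp, denomSeq_mul_fract_sub_numSeq hα, denomSeq_mul_fract_sub_numSeq hα]
  have hAB : (-1 : ℝ) ^ (m + 1) * eta α (m + 1 + 1) * ((-1) ^ m * eta α (m + 1)) ≤ 0 :=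
    calc _ = -(((-1 : ℝ) ^ m) ^ 2 * (eta α (m + 2) * eta α (m + 1))) := by ring
      _ ≤ 0 := neg_nonpos.mpr (mul_nonneg (sq_nonneg _) (mul_pos (eta_pos hα _) (eta_pos hα _)).le)
  simpa [abs_mul, abs_of_pos (eta_pos hα _)] using abs_le_abs_intCast_mul_add hy hxy hAB

end ContinuedFraction

section PointSet

variable {x : ℕ → ℝ} {n : ℕ}

theorem bddAbove_range_iInf_abs_sub (x : ℕ → ℝ) (n : ℕ) :
    BddAbove (Set.range fun y : Set.Icc (0 : ℝ) 1 => ⨅ i : Fin n, |(y : ℝ) - x i|) := by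
  refine ⟨1 + |x 0|, ?_⟩
  rintro _ ⟨⟨y, hy0, hy1⟩, rfl⟩
  rcases n with _ | n
  · simp only [Real.iInf_of_isEmpty]; positivity
  · refine (ciInf_le ⟨0, ?_⟩ (0 : Fin (n + 1))).trans ?_
    · rintro _ ⟨i, rfl⟩; exact abs_nonneg _
    · simp only [Fin.val_zero]
      exact (abs_sub _ _).trans (by rw [abs_of_nonneg hy0]; linarith)

theorem fillDist_le (hn : 0 < n) {b : ℝ} (h : ∀ y ∈ Set.Icc (0 : ℝ) 1, ∃ i < n, |y - x i| ≤ b) :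
    fillDist x n ≤ b := by
  have : Nonempty (Fin n) := ⟨⟨0, hn⟩⟩
  refine ciSup_le fun y => ?_
  obtain ⟨i, hi, hb⟩ := h y y.2
  exact ciInf_le_of_le ⟨0, by rintro _ ⟨j, rfl⟩; exact abs_nonneg _⟩ ⟨i, hi⟩ hb

theorem exists_abs_sub_le_fillDist (hn : 0 < n) {y : ℝ} (hy : y ∈ Set.Icc (0 : ℝ) 1) :
    ∃ i < n, |y - x i| ≤ fillDist x n := by
  have : Nonempty (Fin n) := ⟨⟨0, hn⟩⟩
  obtain ⟨i, hi⟩ := exists_eq_ciInf_of_finite (f := fun i : Fin n => |y - x i|)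
  exact ⟨i, i.2, hi ▸ le_ciSup (bddAbove_range_iInf_abs_sub x n) ⟨y, hy⟩⟩

/-- `n` intervals of length `2 h_n` cover `[0, 1]`. -/
theorem one_le_two_mul_fillDist (hn : 0 < n) : 1 ≤ 2 * n * fillDist x n := by
  open MeasureTheory in
  have hcover : Set.Icc (0 : ℝ) 1 ⊆ ⋃ i : Fin n, Metric.closedBall (x i) (fillDist x n) := by
    intro y hy
    obtain ⟨i, hi, hle⟩ := exists_abs_sub_le_fillDist hn hy
    exact Set.mem_iUnion.mpr ⟨⟨i, hi⟩, by rwa [Metric.mem_closedBall, Real.dist_eq]⟩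
  have hvol := (measure_mono (μ := volume) hcover).trans (measure_iUnion_fintype_le _ _)
  simp only [Real.volume_Icc, Real.volume_closedBall, Finset.sum_const, Finset.card_univ,
    Fintype.card_fin, nsmul_eq_mul, sub_zero] at hvol
  rw [← ENNReal.ofReal_natCast, ← ENNReal.ofReal_mul n.cast_nonneg,
    ENNReal.ofReal_le_ofReal_iff'] at hvol
  rcases hvol with h | h <;> linarith

theorem sepRad_nonneg (x : ℕ → ℝ) (n : ℕ) : 0 ≤ sepRad x n :=
  mul_nonneg (by norm_num) (Real.iInf_nonneg fun _ => abs_nonneg _)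

theorem sepRad_le {i j : ℕ} (hij : i < j) (hj : j < n) : sepRad x n ≤ |x i - x j| / 2 := by
  have h := ciInf_le (f := fun p : {p : Fin n × Fin n // p.1 < p.2} => |x p.1.1 - x p.1.2|)
    ⟨0, by rintro _ ⟨p, rfl⟩; exact abs_nonneg _⟩ ⟨(⟨i, hij.trans hj⟩, ⟨j, hj⟩), hij⟩
  rw [sepRad]
  linarith

theorem le_two_mul_sepRad (hn : 2 ≤ n) {b : ℝ} (h : ∀ i j, i < j → j < n → b ≤ |x i - x j|) :
    b ≤ 2 * sepRad x n := by
  have : Nonempty {p : Fin n × Fin n // p.1 < p.2} :=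
    ⟨⟨(⟨0, by omega⟩, ⟨1, by omega⟩), by simp [Fin.lt_def]⟩⟩
  have := le_ciInf fun p : {p : Fin n × Fin n // p.1 < p.2} => h p.1.1 p.1.2 p.2 p.1.2.2
  rw [sepRad]
  linarith

def QuasiUniform (x : ℕ → ℝ) : Prop := ∃ C : ℝ, ∀ n ≥ 2, fillDist x n ≤ C * sepRad x n

end PointSet

section Kronecker

variable {α : ℝ}

theorem kron_zero (α : ℝ) : kron α 0 = 0 := by simp [kron]

theorem kron_mem_Ico (α : ℝ) (i : ℕ) : kron α i ∈ Set.Ico 0 1 :=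
  ⟨Int.fract_nonneg _, Int.fract_lt_one _⟩

theorem kron_eq_add {i j : ℕ} {t : ℝ} {z : ℤ} (h : (j : ℝ) * α = i * α + t + z)
    (h0 : 0 ≤ kron α i + t) (h1 : kron α i + t < 1) : kron α j = kron α i + t :=
  Int.fract_eq_iff.mpr ⟨h0, h1, ⌊(i : ℝ) * α⌋ + z, by
    rw [kron, ← Int.self_sub_floor]; push_cast; linarith⟩

theorem kron_sub_kron (α : ℝ) {i j : ℕ} (hij : i ≤ j) :
    ∃ c : ℤ, kron α j - kron α i = (j - i : ℕ) * α - c :=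
  ⟨⌊(j : ℝ) * α⌋ - ⌊(i : ℝ) * α⌋, by
    simp only [kron, ← Int.self_sub_floor, Nat.cast_sub hij]; push_cast; ring⟩

/-- `x_j` can be taken among `x_{i+k}`, `x_{i-l}`, `x_{i+k-l}`. -/
theorem exists_kron_mem_Ioc {n k l i : ℕ} {a b : ℝ} (hk : k < n) (hl : l < n) (ha : 0 < a)
    (hb : 0 < b) (hka : ∃ z : ℤ, k * α = a + z) (hlb : ∃ z : ℤ, l * α = -b + z) (hi : i < n)
    (h1 : kron α i + (a + b) < 1) :
    ∃ j < n, kron α i < kron α j ∧ kron α j ≤ kron α i + (a + b) := by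
  obtain ⟨z₁, hz₁⟩ := hka
  obtain ⟨z₂, hz₂⟩ := hlb
  have h0 := (kron_mem_Ico α i).1
  rcases lt_or_ge (i + k) n with hik | hik
  · refine ⟨i + k, hik, ?_⟩
    rw [kron_eq_add (i := i) (j := i + k) (t := a) (z := z₁) (by push_cast; linarith) (by linarith)
      (by linarith)]
    constructor <;> linarith
  rcases le_or_gt l i with hli | hli
  · refine ⟨i - l, by omega, ?_⟩
    rw [kron_eq_add (i := i) (j := i - l) (t := b) (z := -z₂)
      (by push_cast [Nat.cast_sub hli]; linarith) (by linarith) (by linarith)]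
    constructor <;> linarith
  · refine ⟨i + k - l, by omega, ?_⟩
    rw [kron_eq_add (i := i) (j := i + k - l) (t := a + b) (z := z₁ - z₂)
      (by push_cast [Nat.cast_sub (by omega : l ≤ i + k)]; linarith) (by linarith) h1]
    constructor <;> linarith

theorem fillDist_kron_le {n k l : ℕ} {a b : ℝ} (hk : k < n) (hl : l < n) (ha : 0 < a)
    (hb : 0 < b) (hka : ∃ z : ℤ, k * α = a + z) (hlb : ∃ z : ℤ, l * α = -b + z) :
    fillDist (kron α) n ≤ a + b := by
  refine fillDist_le (by omega) fun y hy => ?_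
  -- `x_i` is the largest of the first `n` points to the left of `y`
  obtain ⟨i, hiS, hmax⟩ := ((Finset.range n).filter (kron α · ≤ y)).exists_max_image (kron α)
    ⟨0, Finset.mem_filter.mpr ⟨Finset.mem_range.mpr (by omega), (kron_zero α).trans_le hy.1⟩⟩
  rw [Finset.mem_filter, Finset.mem_range] at hiS
  refine ⟨i, hiS.1, ?_⟩
  by_contra! hgap
  rw [abs_of_nonneg (sub_nonneg.mpr hiS.2)] at hgap
  obtain ⟨j, hj, hij, hjy⟩ := exists_kron_mem_Ioc hk hl ha hb hka hlb hiS.1 (by linarith [hy.2])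
  have := hmax j (by simp only [Finset.mem_filter, Finset.mem_range]; exact ⟨hj, by linarith⟩)
  linarith

theorem exists_denomSeq_mul_eq (hα : Irrational α) (m : ℕ) :
    ∃ z : ℤ, denomSeq α m * α = (-1) ^ m * eta α (m + 1) + z :=
  ⟨numSeq α m + denomSeq α m * ⌊α⌋, by
    push_cast
    linear_combination denomSeq_mul_fract_sub_numSeq hα m + denomSeq α m * Int.self_sub_floor α⟩

theorem exists_denomPred_mul_eq (hα : Irrational α) (m : ℕ) :
    ∃ z : ℤ, denomPred α m * α = -((-1) ^ m * eta α m) + z := by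
  cases m with
  | zero => exact ⟨1, by simp [denomPred, eta]⟩
  | succ m =>
    obtain ⟨z, hz⟩ := exists_denomSeq_mul_eq hα m
    exact ⟨z, by rw [denomPred, hz, pow_succ]; ring⟩

theorem fillDist_kron_le_eta (hα : Irrational α) {m n : ℕ} (hn : denomSeq α m < n) :
    fillDist (kron α) n ≤ eta α m + eta α (m + 1) := by
  have hpred : denomPred α m < n := (denomPred_le_denomSeq hα m).trans_lt hn
  obtain ⟨z, hz⟩ := exists_denomSeq_mul_eq hα m
  obtain ⟨z', hz'⟩ := exists_denomPred_mul_eq hα m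
  rcases neg_one_pow_eq_or ℝ m with h | h <;> rw [h] at hz hz'
  · rw [add_comm]
    exact fillDist_kron_le hn hpred (eta_pos hα _) (eta_pos hα _) ⟨z, by rw [hz, one_mul]⟩
      ⟨z', by rw [hz', one_mul]⟩
  · exact fillDist_kron_le hpred hn (eta_pos hα _) (eta_pos hα _) ⟨z', by rw [hz']; ring⟩
      ⟨z, by rw [hz]; ring⟩

theorem eta_le_two_mul_sepRad_kron (hα : Irrational α) {m n : ℕ} (hn : 2 ≤ n)
    (hns : n ≤ denomSeq α (m + 1)) : eta α (m + 1) ≤ 2 * sepRad (kron α) n :=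
  le_two_mul_sepRad hn fun i j hij hj => by
    obtain ⟨c, hc⟩ := kron_sub_kron α hij.le
    rw [abs_sub_comm, hc]
    exact eta_le_abs_mul_sub hα (by omega) (by omega) c

theorem two_mul_sepRad_kron_le_eta (hα : Irrational α) (m : ℕ) :
    2 * sepRad (kron α) (denomSeq α m + 2) ≤ eta α (m + 1) := by
  have hs := one_le_denomSeq hα m
  have hη := eta_pos hα (m + 1)
  have hη₁ : eta α (m + 1) ≤ kron α 1 := by
    simpa [kron, eta_one] using eta_antitone hα (Nat.le_add_left 1 m)
  have hx₁ := kron_mem_Ico α 1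
  obtain ⟨z, hz⟩ := exists_denomSeq_mul_eq hα m
  rcases neg_one_pow_eq_or ℝ m with h | h <;> rw [h] at hz
  · have hsep := sepRad_le (x := kron α) (n := denomSeq α m + 2) (i := 0) (j := denomSeq α m)
      (by omega) (by omega)
    rw [kron_eq_add (i := 0) (j := denomSeq α m) (t := eta α (m + 1)) (z := z) (by simpa using hz)
      (by rw [kron_zero]; linarith) (by rw [kron_zero]; linarith [hx₁.2]), kron_zero,
      zero_add, zero_sub, abs_neg, abs_of_pos hη] at hsep
    linarith
  · have hsep := sepRad_le (x := kron α) (n := denomSeq α m + 2) (i := 1) (j := denomSeq α m + 1)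
      (by omega) (by omega)
    rw [kron_eq_add (i := 1) (j := denomSeq α m + 1) (t := -eta α (m + 1)) (z := z)
      (by push_cast; linarith) (by linarith) (by linarith [hx₁.2]), sub_add_cancel_left, neg_neg,
      abs_of_pos hη] at hsep
    linarith

theorem partialQuot_mul_denomSeq_mul_eta_le_one (hα : Irrational α) (m : ℕ) :
    partialQuot α (m + 1) * denomSeq α m * eta α (m + 1) ≤ 1 := by
  have hle : (partialQuot α (m + 1) * denomSeq α m : ℝ) ≤ denomSeq α (m + 1) := by
    exact_mod_cast partialQuot_mul_denomSeq_le m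
  have := denomSeq_mul_eta_add hα m
  nlinarith [eta_pos hα (m + 1), eta_pos hα (m + 2), (denomSeq α m).cast_nonneg (α := ℝ)]

theorem eta_le_mul_eta_succ (hα : Irrational α) {m B : ℕ} (hB : partialQuot α (m + 1) ≤ B) :
    eta α m ≤ (B + 1) * eta α (m + 1) := by
  have hB' : (partialQuot α (m + 1) : ℝ) ≤ B := by exact_mod_cast hB
  have := eta_add_two hα m
  nlinarith [eta_succ_lt hα (m + 1), eta_pos hα (m + 1)]

theorem exists_denomSeq_lt_le (hα : Irrational α) {n : ℕ} (hn : 2 ≤ n) :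
    ∃ m, denomSeq α m < n ∧ n ≤ denomSeq α (m + 1) := by
  have hex : ∃ m, n ≤ denomSeq α m := ⟨n, self_le_denomSeq hα n⟩
  obtain ⟨m, hm⟩ : ∃ m, Nat.find hex = m + 1 :=
    Nat.exists_eq_add_one_of_ne_zero fun h0 =>
      absurd ((Nat.find_eq_zero hex).mp h0) (show ¬n ≤ 1 by omega)
  exact ⟨m, not_le.mp (Nat.find_min hex (by omega)), hm ▸ Nat.find_spec hex⟩

theorem quasiUniform_kron_of_partialQuot_le (hα : Irrational α) {B : ℕ}
    (hB : ∀ j ≥ 1, partialQuot α j ≤ B) : QuasiUniform (kron α) := by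
  refine ⟨2 * (B + 2), fun n hn => ?_⟩
  obtain ⟨m, hsn, hns⟩ := exists_denomSeq_lt_le hα hn
  have hη := eta_le_mul_eta_succ hα (hB (m + 1) (Nat.le_add_left 1 m))
  calc fillDist (kron α) n ≤ eta α m + eta α (m + 1) := fillDist_kron_le_eta hα hsn
    _ ≤ (B + 2) * eta α (m + 1) := by linarith
    _ ≤ (B + 2) * (2 * sepRad (kron α) n) := by
      gcongr
      exact eta_le_two_mul_sepRad_kron hα hn hns
    _ = 2 * (B + 2) * sepRad (kron α) n := by ring

theorem irrational_of_quasiUniform_kron (h : QuasiUniform (kron α)) : Irrational α := by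
  rintro ⟨q, rfl⟩
  obtain ⟨C, hC⟩ := h
  have hrepeat : kron q q.den = kron q 0 := by
    rw [kron_zero, kron, ← Rat.cast_natCast, ← Rat.cast_mul, Rat.den_mul_eq_num]
    simp
  have hsep : sepRad (kron q) (q.den + 1) = 0 :=
    le_antisymm (by simpa [hrepeat] using sepRad_le (x := kron q) q.den_pos (Nat.lt_succ_self _))
      (sepRad_nonneg _ _)
  have hfill := hC (q.den + 1) (by have := q.den_pos; omega)
  have := one_le_two_mul_fillDist (x := kron q) (Nat.succ_pos q.den)
  rw [hsep, mul_zero] at hfill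
  nlinarith

theorem partialQuot_le_of_quasiUniform_kron (hα : Irrational α) {C : ℝ}
    (hC : ∀ n ≥ 2, fillDist (kron α) n ≤ C * sepRad (kron α) n) (m : ℕ) :
    (partialQuot α (m + 1) : ℝ) ≤ 3 * C := by
  set s := denomSeq α m
  have hs : (1 : ℝ) ≤ s := by exact_mod_cast one_le_denomSeq hα m
  have hη := eta_pos hα (m + 1)
  have hfill := one_le_two_mul_fillDist (x := kron α) (n := s + 2) (by omega)
  have hsep : 2 * sepRad (kron α) (s + 2) ≤ eta α (m + 1) := two_mul_sepRad_kron_le_eta hα m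
  have hsep₀ := sepRad_nonneg (kron α) (s + 2)
  have hquot := partialQuot_mul_denomSeq_mul_eta_le_one hα m
  have hC' := hC (s + 2) (by omega)
  push_cast at hfill
  have h1 : 1 ≤ (s + 2) * C * (2 * sepRad (kron α) (s + 2)) := by nlinarith
  have hC₀ : 0 ≤ C := by nlinarith [mul_nonneg (by positivity : (0 : ℝ) ≤ s + 2) hsep₀]
  have h2 : 1 ≤ 3 * s * C * eta α (m + 1) :=
    calc 1 ≤ (s + 2) * C * (2 * sepRad (kron α) (s + 2)) := h1
      _ ≤ (s + 2) * C * eta α (m + 1) := by gcongr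
      _ ≤ 3 * s * C * eta α (m + 1) := by gcongr; linarith
  calc (partialQuot α (m + 1) : ℝ) ≤ partialQuot α (m + 1) * (3 * s * C * eta α (m + 1)) :=
        le_mul_of_one_le_right (Nat.cast_nonneg _) h2
    _ = 3 * C * (partialQuot α (m + 1) * s * eta α (m + 1)) := by ring
    _ ≤ 3 * C := mul_le_of_le_one_right (by positivity) hquot

end Kronecker

theorem kronecker_quasi_uniform_iff_badly_approximable_general (α : ℝ) :
    (∃ C : ℝ, ∀ n ≥ 2, fillDist (kron α) n ≤ C * sepRad (kron α) n) ↔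
      (Irrational α ∧ ∃ B : ℕ, ∀ j ≥ 1, partialQuot α j ≤ B) := by
  constructor
  · intro h
    have hα := irrational_of_quasiUniform_kron h
    obtain ⟨C, hC⟩ := h
    refine ⟨hα, ⌈3 * C⌉₊, fun j hj => ?_⟩
    obtain ⟨m, rfl⟩ := Nat.exists_eq_add_of_le' hj
    exact_mod_cast (partialQuot_le_of_quasiUniform_kron hα hC m).trans (Nat.le_ceil _)
  · rintro ⟨hα, B, hB⟩
    exact quasiUniform_kron_of_partialQuot_le hα hB

/-- Main theorem: the Kronecker sequence is quasi-uniform over `[0,1]` iff `α`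
is badly approximable. -/
theorem kronecker_quasi_uniform_iff_badly_approximable (α : ℝ) (hpos : 0 < α) :
    (∃ C : ℝ, ∀ n ≥ 2, fillDist (kron α) n ≤ C * sepRad (kron α) n) ↔
      (Irrational α ∧ ∃ B : ℕ, ∀ j ≥ 1, partialQuot α j ≤ B) :=
  kronecker_quasi_uniform_iff_badly_approximable_general α
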